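/- Define q(x,ξ) := ∫_{S^{d−1}} ∫₀^∞ (1 − e^{i⟨r^{E(x)}θ,ξ⟩} + 1_{(0,1)}(r) i⟨r^{E(x)}θ,ξ⟩) r^{−2} dr σ(dθ), where E(x) is symmetric with eigenvalues ≥ a > 1/2 for all x and σ is finite. Then there exists C > 0 with sup_{x ∈ ℝ^d} |q(x,ξ)| ≤ C(1 + ‖ξ‖²) for all ξ ∈ ℝ^d. -/

import Mathlib

open Matrix MeasureTheory
open scoped ENNReal

noncomputable def toCLM {d : ℕ} (A : Matrix (Fin d) (Fin d) ℝ) :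
    EuclideanSpace ℝ (Fin d) →L[ℝ] EuclideanSpace ℝ (Fin d) :=
  LinearMap.toContinuousLinearMap (Matrix.toEuclideanLin A)

/-- `mexp A r` is the matrix power `r^A := exp(A log r)`, acting on Euclidean space,
so that `‖mexp A r‖` is the operator norm induced by the Euclidean norm. -/
noncomputable def mexp {d : ℕ} (A : Matrix (Fin d) (Fin d) ℝ) (r : ℝ) :
    EuclideanSpace ℝ (Fin d) →L[ℝ] EuclideanSpace ℝ (Fin d) :=
  NormedSpace.exp (Real.log r • toCLM A)

/-- The symbol `q(x,ξ)` of an operator-stable-like process, here for the matrix `E = E(x)`: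
`q(x,ξ) = ∫_{S^{d-1}} ∫_0^∞ (1 - e^{i⟨r^E θ, ξ⟩} + 1_{(0,1)}(r) i⟨r^E θ, ξ⟩) r^{-2} dr σ(dθ)`. -/
noncomputable def symb {d : ℕ} (σ : Measure (Metric.sphere (0 : EuclideanSpace ℝ (Fin d)) 1))
    (E : Matrix (Fin d) (Fin d) ℝ) (ξ : EuclideanSpace ℝ (Fin d)) : ℂ :=
  ∫ θ, (∫ r in Set.Ioi (0:ℝ),
      (1 - Complex.exp (Complex.I *
          ((inner ℝ (mexp E r (θ : EuclideanSpace ℝ (Fin d))) ξ : ℝ) : ℂ)) +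
        (Set.Ioo (0:ℝ) 1).indicator
          (fun _ => Complex.I *
            ((inner ℝ (mexp E r (θ : EuclideanSpace ℝ (Fin d))) ξ : ℝ) : ℂ)) r) / ((r : ℂ) ^ 2)
    ∂volume) ∂σ

/-! On an orthonormal eigenbasis of `E`, `r ^ E` acts diagonally by `r ^ λᵢ`, so
`‖r ^ E‖ ≤ r ^ a` for `0 < r ≤ 1`. With `u = ⟪r ^ E θ, ξ⟫`, the integrand is then at most
`2 u² / r² ≤ 2 ‖ξ‖² r ^ (2a - 2)` near `0`, which is integrable exactly because `a > 1/2`,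
while for `r ≥ 1` it is at most `2 / r²`. This bounds the inner integral by
`2 ‖ξ‖² / (2a - 1) + 2` uniformly in `θ` and `x`, and the finite measure `σ` contributes only
the factor `σ(S^{d-1})`. -/

open Set Complex
open scoped InnerProductSpace

theorem NormedSpace.exp_apply_of_apply_eq_smul {𝕂 V : Type*} [RCLike 𝕂] [NormedAddCommGroup V]
    [NormedSpace 𝕂 V] [CompleteSpace V] {T : V →L[𝕂] V} {v : V} {μ : 𝕂} (h : T v = μ • v) :
    NormedSpace.exp T v = NormedSpace.exp μ • v := by
  have hpow : ∀ n : ℕ, (T ^ n) v = μ ^ n • v := by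
    intro n
    induction n with
    | zero => simp
    | succ n ih =>
      rw [pow_succ', ContinuousLinearMap.mul_def, ContinuousLinearMap.comp_apply, ih, map_smul, h,
        smul_smul, pow_succ]
  have hT := (NormedSpace.exp_series_hasSum_exp' (𝕂 := 𝕂) T).mapL (ContinuousLinearMap.apply 𝕂 V v)
  have hμ := (NormedSpace.exp_series_hasSum_exp' (𝕂 := 𝕂) μ).smul_const v
  refine hT.unique (hμ.congr_fun fun n => ?_)
  simp [hpow, smul_smul]

theorem mexp_apply_of_apply_eq_smul {d : ℕ} {A : Matrix (Fin d) (Fin d) ℝ}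
    {v : EuclideanSpace ℝ (Fin d)} {μ : ℝ} (h : toCLM A v = μ • v) {r : ℝ} (hr : 0 < r) :
    mexp A r v = r ^ μ • v := by
  have hlog : (Real.log r • toCLM A) v = (Real.log r * μ) • v := by
    rw [_root_.smul_apply, h, smul_smul]
  rw [mexp, NormedSpace.exp_apply_of_apply_eq_smul hlog, ← Real.exp_eq_exp_ℝ,
    ← Real.rpow_def_of_pos hr]

theorem Matrix.IsHermitian.toCLM_eigenvectorBasis {d : ℕ} {A : Matrix (Fin d) (Fin d) ℝ}
    (hA : A.IsHermitian) (i : Fin d) :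
    toCLM A (hA.eigenvectorBasis i) = hA.eigenvalues i • hA.eigenvectorBasis i := by
  ext j
  simpa [toCLM, Matrix.toLpLin_apply] using congrFun (hA.mulVec_eigenvectorBasis i) j

theorem OrthonormalBasis.norm_apply_le_of_apply_eq_smul {ι 𝕜 V : Type*} [Fintype ι] [RCLike 𝕜]
    [NormedAddCommGroup V] [InnerProductSpace 𝕜 V] (b : OrthonormalBasis ι 𝕜 V) {T : V →ₗ[𝕜] V}
    {c : ι → 𝕜} (hT : ∀ i, T (b i) = c i • b i) {C : ℝ} (hC : 0 ≤ C) (hc : ∀ i, ‖c i‖ ≤ C)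
    (y : V) : ‖T y‖ ≤ C * ‖y‖ := by
  have hrepr : ∀ i, b.repr (T y) i = c i * b.repr y i := by
    classical
    intro i
    conv_lhs => rw [← b.sum_repr y]
    simp [hT, b.repr_self, Pi.single_apply, mul_comm]
  rw [← b.repr.norm_map (T y), ← b.repr.norm_map y]
  refine le_of_sq_le_sq ?_ (by positivity)
  rw [mul_pow, EuclideanSpace.norm_sq_eq, EuclideanSpace.norm_sq_eq, Finset.mul_sum]
  refine Finset.sum_le_sum fun i _ => ?_
  rw [hrepr, norm_mul, mul_pow]
  gcongr
  exact hc i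

theorem norm_mexp_apply_le {d : ℕ} {A : Matrix (Fin d) (Fin d) ℝ} (hA : A.IsHermitian) {a : ℝ}
    (ha : ∀ i, a ≤ hA.eigenvalues i) {r : ℝ} (hr₀ : 0 < r) (hr₁ : r ≤ 1)
    (y : EuclideanSpace ℝ (Fin d)) : ‖mexp A r y‖ ≤ r ^ a * ‖y‖ :=
  hA.eigenvectorBasis.norm_apply_le_of_apply_eq_smul (T := (mexp A r).toLinearMap)
    (fun i => mexp_apply_of_apply_eq_smul (hA.toCLM_eigenvectorBasis i) hr₀) (by positivity)
    (fun i => by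
      rw [Real.norm_of_nonneg (by positivity)]
      exact Real.rpow_le_rpow_of_exponent_ge hr₀ hr₁ (ha i)) y

theorem norm_exp_I_mul_ofReal_sub_one_sub_le (u : ℝ) :
    ‖exp (I * u) - 1 - I * u‖ ≤ 2 * u ^ 2 := by
  have hIu : ‖I * u‖ = |u| := by simp
  rcases le_or_gt |u| 1 with hu | hu
  · calc ‖exp (I * u) - 1 - I * u‖ ≤ ‖I * u‖ ^ 2 :=
          norm_exp_sub_one_sub_id_le (hIu ▸ hu)
      _ ≤ 2 * u ^ 2 := by rw [hIu, sq_abs]; nlinarith [sq_nonneg u]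
  · calc ‖exp (I * u) - 1 - I * u‖ ≤ ‖exp (I * u) - 1‖ + ‖I * u‖ := norm_sub_le _ _
      _ ≤ |u| + |u| := by rw [hIu]; gcongr; exact Real.norm_exp_I_mul_ofReal_sub_one_le
      _ ≤ 2 * u ^ 2 := by nlinarith [sq_abs u]

theorem norm_one_sub_exp_I_mul_ofReal_le (u : ℝ) : ‖1 - exp (I * u)‖ ≤ 2 := by
  calc ‖1 - exp (I * u)‖ ≤ ‖(1 : ℂ)‖ + ‖exp (I * u)‖ := norm_sub_le _ _
    _ = 2 := by rw [norm_exp_I_mul_ofReal]; norm_num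

theorem norm_setIntegral_Ioi_zero_le_of_le_rpow {V : Type*} [NormedAddCommGroup V]
    [NormedSpace ℝ V] {f : ℝ → V} {p q K M : ℝ} (hp : -1 < p) (hq : q < -1)
    (h_small : ∀ r ∈ Ioo 0 1, ‖f r‖ ≤ K * r ^ p) (h_large : ∀ r, 1 ≤ r → ‖f r‖ ≤ M * r ^ q) :
    ‖∫ r in Ioi 0, f r‖ ≤ K / (p + 1) - M / (q + 1) := by
  set g₁ := (Ioo (0 : ℝ) 1).indicator fun r => K * r ^ p
  set g₂ := (Ici (1 : ℝ)).indicator fun r => M * r ^ q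
  have hg₁ : Integrable g₁ (volume.restrict (Ioi 0)) :=
    (IntegrableOn.integrable_indicator
      (((intervalIntegral.integrableOn_Ioo_rpow_iff zero_lt_one).mpr hp).const_mul K)
      measurableSet_Ioo).restrict
  have hg₂ : Integrable g₂ (volume.restrict (Ioi 0)) :=
    (IntegrableOn.integrable_indicator
      ((Iff.mpr integrableOn_Ici_iff_integrableOn_Ioi
        (integrableOn_Ioi_rpow_of_lt hq one_pos)).const_mul M)
      measurableSet_Ici).restrict
  have h_dom : ∀ r ∈ Ioi (0 : ℝ), ‖f r‖ ≤ g₁ r + g₂ r := by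
    intro r (hr : 0 < r)
    rcases lt_or_ge r 1 with hr₁ | hr₁
    · simp [g₁, g₂, hr, hr₁, not_le.mpr hr₁, h_small r ⟨hr, hr₁⟩]
    · simp [g₁, g₂, hr₁, not_lt.mpr hr₁, h_large r hr₁]
  have h_int₁ : ∫ r in Ioi 0, g₁ r = K / (p + 1) := by
    rw [setIntegral_indicator measurableSet_Ioo, inter_eq_self_of_subset_right Ioo_subset_Ioi_self,
      ← integral_Ioc_eq_integral_Ioo, ← intervalIntegral.integral_of_le zero_le_one,
      intervalIntegral.integral_const_mul, integral_rpow (Or.inl hp),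
      Real.zero_rpow (by linarith), Real.one_rpow]
    ring
  have h_int₂ : ∫ r in Ioi 0, g₂ r = - M / (q + 1) := by
    rw [setIntegral_indicator measurableSet_Ici,
      inter_eq_self_of_subset_right (Ici_subset_Ioi.mpr zero_lt_one),
      integral_Ici_eq_integral_Ioi, integral_const_mul, integral_Ioi_rpow_of_lt hq one_pos,
      Real.one_rpow]
    ring
  calc ‖∫ r in Ioi 0, f r‖ ≤ ∫ r in Ioi 0, (g₁ r + g₂ r) :=
        norm_integral_le_of_norm_le (hg₁.add hg₂) ((ae_restrict_iff' measurableSet_Ioi).mpr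
          (ae_of_all _ h_dom))
    _ = K / (p + 1) - M / (q + 1) := by rw [integral_add hg₁ hg₂, h_int₁, h_int₂]; ring

noncomputable def symbIntegrand {d : ℕ} (E : Matrix (Fin d) (Fin d) ℝ)
    (ξ v : EuclideanSpace ℝ (Fin d)) (r : ℝ) : ℂ :=
  (1 - exp (I * (⟪mexp E r v, ξ⟫_ℝ : ℂ)) +
    (Ioo (0 : ℝ) 1).indicator (fun _ => I * (⟪mexp E r v, ξ⟫_ℝ : ℂ)) r) / (r : ℂ) ^ 2

theorem symb_eq_integral_symbIntegrand {d : ℕ}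
    (σ : Measure (Metric.sphere (0 : EuclideanSpace ℝ (Fin d)) 1))
    (E : Matrix (Fin d) (Fin d) ℝ) (ξ : EuclideanSpace ℝ (Fin d)) :
    symb σ E ξ = ∫ θ, (∫ r in Ioi 0, symbIntegrand E ξ θ r) ∂σ :=
  rfl

section symbIntegrand

variable {d : ℕ} {E : Matrix (Fin d) (Fin d) ℝ} (ξ v : EuclideanSpace ℝ (Fin d))

theorem norm_symbIntegrand_le_of_mem_Ioo (hE : E.IsHermitian) {a : ℝ}
    (ha : ∀ i, a ≤ hE.eigenvalues i) {r : ℝ} (hr : r ∈ Ioo 0 1) :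
    ‖symbIntegrand E ξ v r‖ ≤ 2 * (‖v‖ * ‖ξ‖) ^ 2 * r ^ (2 * a - 2) := by
  have hr₀ := hr.1
  set u := ⟪mexp E r v, ξ⟫_ℝ
  have hu : |u| ≤ r ^ a * (‖v‖ * ‖ξ‖) :=
    calc |u| ≤ ‖mexp E r v‖ * ‖ξ‖ := abs_real_inner_le_norm _ _
      _ ≤ r ^ a * ‖v‖ * ‖ξ‖ := by gcongr; exact norm_mexp_apply_le hE ha hr₀ hr.2.le v
      _ = r ^ a * (‖v‖ * ‖ξ‖) := mul_assoc _ _ _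
  have hrpow : r ^ (2 * a - 2) = (r ^ a) ^ 2 / r ^ 2 := by
    rw [Real.rpow_sub hr₀, mul_comm 2 a, Real.rpow_mul hr₀.le]
    norm_cast
  have hsymb : symbIntegrand E ξ v r = -(exp (I * u) - 1 - I * u) / (r : ℂ) ^ 2 := by
    rw [symbIntegrand, indicator_of_mem hr]
    ring
  rw [hsymb, norm_div, norm_neg, norm_pow, Complex.norm_real, Real.norm_of_nonneg hr₀.le, hrpow,
    mul_div_assoc', div_le_div_iff_of_pos_right (by positivity)]
  calc ‖exp (I * u) - 1 - I * u‖ ≤ 2 * |u| ^ 2 := by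
        rw [sq_abs]; exact norm_exp_I_mul_ofReal_sub_one_sub_le u
    _ ≤ 2 * (r ^ a * (‖v‖ * ‖ξ‖)) ^ 2 := by gcongr
    _ = 2 * (‖v‖ * ‖ξ‖) ^ 2 * (r ^ a) ^ 2 := by ring

theorem norm_symbIntegrand_le_of_one_le {r : ℝ} (hr : 1 ≤ r) :
    ‖symbIntegrand E ξ v r‖ ≤ 2 * r ^ (-2 : ℝ) := by
  have hr₀ : 0 < r := zero_lt_one.trans_le hr
  rw [symbIntegrand, indicator_of_notMem fun h => (not_lt.mpr hr) h.2, add_zero, norm_div,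
    norm_pow, Complex.norm_real, Real.norm_of_nonneg hr₀.le, Real.rpow_neg hr₀.le,
    Real.rpow_two, ← div_eq_mul_inv]
  gcongr
  exact norm_one_sub_exp_I_mul_ofReal_le _

theorem norm_integral_symbIntegrand_le (hE : E.IsHermitian) {a : ℝ} (ha : 1 / 2 < a)
    (hEa : ∀ i, a ≤ hE.eigenvalues i) :
    ‖∫ r in Ioi 0, symbIntegrand E ξ v r‖ ≤ 2 * (‖v‖ * ‖ξ‖) ^ 2 / (2 * a - 1) + 2 := by
  have h := norm_setIntegral_Ioi_zero_le_of_le_rpow (by linarith) (by norm_num)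
    (fun r hr => norm_symbIntegrand_le_of_mem_Ioo ξ v hE hEa hr)
    (fun r hr => norm_symbIntegrand_le_of_one_le ξ v hr)
  convert h using 2
  ring

end symbIntegrand

theorem norm_symb_le {d : ℕ} (σ : Measure (Metric.sphere (0 : EuclideanSpace ℝ (Fin d)) 1))
    [IsFiniteMeasure σ] {E : Matrix (Fin d) (Fin d) ℝ} (hE : E.IsHermitian) {a : ℝ}
    (ha : 1 / 2 < a) (hEa : ∀ i, a ≤ hE.eigenvalues i) (ξ : EuclideanSpace ℝ (Fin d)) :
    ‖symb σ E ξ‖ ≤ (2 * ‖ξ‖ ^ 2 / (2 * a - 1) + 2) * σ.real univ := by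
  rw [symb_eq_integral_symbIntegrand]
  refine norm_integral_le_of_norm_le_const (ae_of_all _ fun θ => ?_)
  simpa [norm_eq_of_mem_sphere θ] using norm_integral_symbIntegrand_le ξ θ hE ha hEa

theorem stmt10 (d : ℕ) (a : ℝ) (ha : 1/2 < a)
    (σ : Measure (Metric.sphere (0 : EuclideanSpace ℝ (Fin d)) 1)) [IsFiniteMeasure σ]
    (E : EuclideanSpace ℝ (Fin d) → Matrix (Fin d) (Fin d) ℝ)
    (hsym : ∀ x, (E x).IsHermitian)
    (heig : ∀ x i, a ≤ (hsym x).eigenvalues i) :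
    ∃ C : ℝ, 0 < C ∧ ∀ (x ξ : EuclideanSpace ℝ (Fin d)),
      ‖symb σ (E x) ξ‖ ≤ C * (1 + ‖ξ‖ ^ 2) := by
  have h2a : 0 < 2 * a - 1 := by linarith
  set K := 2 / (2 * a - 1) + 2
  refine ⟨K * σ.real univ + 1, by positivity, fun x ξ => ?_⟩
  have hξ : 2 * ‖ξ‖ ^ 2 / (2 * a - 1) + 2 ≤ K * (1 + ‖ξ‖ ^ 2) :=
    calc 2 * ‖ξ‖ ^ 2 / (2 * a - 1) + 2 ≤ 2 * (1 + ‖ξ‖ ^ 2) / (2 * a - 1) + 2 * (1 + ‖ξ‖ ^ 2) := by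
          gcongr <;> nlinarith [sq_nonneg ‖ξ‖]
      _ = K * (1 + ‖ξ‖ ^ 2) := by ring
  calc ‖symb σ (E x) ξ‖ ≤ (2 * ‖ξ‖ ^ 2 / (2 * a - 1) + 2) * σ.real univ :=
        norm_symb_le σ (hsym x) ha (heig x) ξ
    _ ≤ K * (1 + ‖ξ‖ ^ 2) * σ.real univ := by gcongr
    _ ≤ (K * σ.real univ + 1) * (1 + ‖ξ‖ ^ 2) := by nlinarith [sq_nonneg ‖ξ‖]
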